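/- arXiv:2409.00897 — 6 statements merged into one kernel-verified Lean document; each statement's English description precedes it below -/
import Mathlib

section
/- Bounded sensitivity to a single attack: if the output sequences O and O' agree except at a single slot t₁ where O'(t₁) = O(t₁) - α for some α ≥ 0, then for all t ≥ t₁ the queue lengths satisfy Q(t) ≤ Q'(t) ≤ Q(t) + α; that is, attacking a single slot increases the queue length at any later time by at most the blocked amount α. -/
lemma min_sandwich {c x x' α : ℝ} (hα : 0 ≤ α) (h1 : x ≤ x') (h2 : x' ≤ x + α) :
    min c x ≤ min c x' ∧ min c x' ≤ min c x + α := by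
  constructor
  · exact min_le_min le_rfl h1
  · calc min c x' ≤ min (c + α) (x + α) :=
          min_le_min (le_add_of_nonneg_right hα) h2
      _ = min c x + α := min_add_add_right c x α

/-- Bounded sensitivity to a single attack: attacking a single slot t₁ (reducing
its output by α ≥ 0) increases the queue length at any later time by at most α. -/
theorem single_attack_bounded_sensitivity
    (c : ℝ) (hc : 0 ≤ c) (t₀ t₁ : ℕ) (ht01 : t₀ ≤ t₁) (α : ℝ)
    (Q Q' I O O' : ℕ → ℝ)
    (hinit : Q t₀ = Q' t₀) (h0 : 0 ≤ Q t₀) (h0c : Q t₀ ≤ c)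
    (hI : ∀ t, 0 ≤ I t)
    (hα0 : 0 ≤ α) (hαle : α ≤ O t₁)
    (hO'eq : ∀ t, t ≠ t₁ → O' t = O t) (hO't₁ : O' t₁ = O t₁ - α)
    (hO0 : ∀ t, 0 ≤ O t) (hO'0 : ∀ t, 0 ≤ O' t)
    (hOfeas : ∀ t, O t ≤ Q (t - 1) + I t)
    (hO'feas : ∀ t, O' t ≤ Q' (t - 1) + I t)
    (hrec : ∀ t, t₀ < t → Q t = min c (Q (t - 1) + I t - O t))
    (hrec' : ∀ t, t₀ < t → Q' t = min c (Q' (t - 1) + I t - O' t)) :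
    ∀ t, t₁ ≤ t → Q t ≤ Q' t ∧ Q' t ≤ Q t + α := by
  -- Q and Q' agree strictly before t₁
  have hagree : ∀ t, t₀ ≤ t → t < t₁ → Q t = Q' t := by
    intro t
    induction t with
    | zero =>
      intro h0' _
      have : t₀ = 0 := Nat.le_zero.mp h0'
      rw [← this]; exact hinit
    | succ n ih =>
      intro hle hlt
      rcases Nat.lt_or_ge t₀ (n+1) with h | h
      · have hn : t₀ ≤ n := Nat.lt_succ_iff.mp h
        have hQn : Q n = Q' n := ih hn (Nat.lt_of_succ_lt hlt)
        have hO' : O' (n+1) = O (n+1) := hO'eq _ (Nat.ne_of_lt hlt)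
        rw [hrec (n+1) h, hrec' (n+1) h, hO']
        simp [hQn]
      · have : t₀ = n + 1 := le_antisymm hle h
        rw [← this]; exact hinit
  intro t ht
  induction t, ht using Nat.le_induction with
  | base =>
    rcases eq_or_lt_of_le ht01 with heq | hlt
    · rw [← heq, ← hinit]
      exact ⟨le_rfl, le_add_of_nonneg_right hα0⟩
    · have h1 : 1 ≤ t₁ := Nat.one_le_iff_ne_zero.mpr (by omega)
      have hprev : Q (t₁ - 1) = Q' (t₁ - 1) := hagree _ (by omega) (by omega)
      have hQ := hrec t₁ hlt
      have hQ' := hrec' t₁ hlt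
      rw [hO't₁, ← hprev] at hQ'
      rw [hQ, hQ']
      have := min_sandwich (c := c) (x := Q (t₁-1) + I t₁ - O t₁)
        (x' := Q (t₁-1) + I t₁ - (O t₁ - α)) hα0 (by linarith) (by linarith)
      exact this
  | succ n hn ih =>
    have ht0 : t₀ < n + 1 := by omega
    have hO' : O' (n+1) = O (n+1) := hO'eq _ (by omega)
    have hQ := hrec (n+1) ht0
    have hQ' := hrec' (n+1) ht0
    rw [hO'] at hQ'
    simp only [Nat.add_sub_cancel] at hQ hQ'
    rw [hQ, hQ']
    obtain ⟨ih1, ih2⟩ := ih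
    exact min_sandwich hα0 (by linarith) (by linarith)
end

section
/- Overflow absorbs attacks (Lemma 1, single-slot version): suppose outputs O' equal O except O'(t₁) = O(t₁) - α with α ≥ 0, and suppose there exists a slot t₂ ≥ t₁ at which the original queue is full, i.e. Q(t₂) = c. Then for all t ≥ t₂ the two queue evolutions coincide: Q'(t) = Q(t). In particular, attacking a time slot at or before the last time the queue is full has no effect on subsequent queue dynamics. -/
/-- Overflow absorbs attacks (single-slot version): if the original queue is full
at some slot t₂ ≥ t₁ (the attacked slot), then the attacked and original queue
evolutions coincide for all t ≥ t₂. -/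
theorem overflow_absorbs_attack
    (c : ℝ) (hc : 0 ≤ c) (t₀ t₁ t₂ : ℕ) (ht01 : t₀ ≤ t₁) (ht12 : t₁ ≤ t₂) (α : ℝ)
    (Q Q' I O O' : ℕ → ℝ)
    (hinit : Q t₀ = Q' t₀) (h0 : 0 ≤ Q t₀) (h0c : Q t₀ ≤ c)
    (hI : ∀ t, 0 ≤ I t)
    (hα0 : 0 ≤ α) (hαle : α ≤ O t₁)
    (hO'eq : ∀ t, t ≠ t₁ → O' t = O t) (hO't₁ : O' t₁ = O t₁ - α)
    (hO0 : ∀ t, 0 ≤ O t) (hO'0 : ∀ t, 0 ≤ O' t)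
    (hOfeas : ∀ t, O t ≤ Q (t - 1) + I t)
    (hO'feas : ∀ t, O' t ≤ Q' (t - 1) + I t)
    (hrec : ∀ t, t₀ < t → Q t = min c (Q (t - 1) + I t - O t))
    (hrec' : ∀ t, t₀ < t → Q' t = min c (Q' (t - 1) + I t - O' t))
    (hfull : Q t₂ = c) :
    ∀ t, t₂ ≤ t → Q' t = Q t := by
  have hO'le : ∀ t, O' t ≤ O t := by
    intro t
    by_cases h : t = t₁
    · subst h; rw [hO't₁]; linarith
    · rw [hO'eq t h]
  have hmono : ∀ t, t₀ ≤ t → Q t ≤ Q' t := by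
    intro t ht
    induction t, ht using Nat.le_induction with
    | base => rw [hinit]
    | succ n hn ih =>
      rw [hrec (n+1) (by omega), hrec' (n+1) (by omega)]
      simp only [Nat.add_sub_cancel]
      have := hO'le (n+1)
      exact min_le_min le_rfl (by linarith)
  have hQ'le : Q' t₂ ≤ c := by
    rcases Nat.eq_or_lt_of_le (le_trans ht01 ht12) with h | h
    · rw [← h, ← hinit]; exact h0c
    · rw [hrec' t₂ h]; exact min_le_left _ _
  have hbase : Q' t₂ = Q t₂ :=
    le_antisymm (hQ'le.trans hfull.ge) (hmono t₂ (le_trans ht01 ht12))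
  intro t ht
  induction t, ht using Nat.le_induction with
  | base => exact hbase
  | succ n hn ih =>
    have h1 : t₀ < n + 1 := by omega
    rw [hrec (n+1) h1, hrec' (n+1) h1]
    simp only [Nat.add_sub_cancel]
    rw [ih, hO'eq (n+1) (by omega)]
end

section
/- Attack strength is nonnegative: for any attack strategy Y (a finite set of attacked slots, each attack reducing the output of the attacked slot) and any additional slot t', the delayed evacuation time satisfies t_e(Y ∪ {t'}) ≥ t_e(Y); i.e., attacking an additional slot never makes the target data evacuate earlier. -/
/-- Attack strength is nonnegative: attacking an additional slot never makes the
target data evacuate earlier, i.e. t_e(Y ∪ {t'}) ≥ t_e(Y) (in the sense that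
whenever the augmented strategy has evacuated by time t, so has the original). -/
theorem attack_strength_nonneg
    (c : ℝ) (hc : 0 ≤ c) (t₀ : ℕ) (q0 Qτ0 : ℝ) (hq0 : 0 ≤ q0) (hq0c : q0 ≤ c)
    (hQτ0 : 0 ≤ Qτ0)
    (I O₀ : ℕ → ℝ) (hI : ∀ t, 0 ≤ I t) (hO₀ : ∀ t, 0 ≤ O₀ t)
    (OY Q D Qτ : Set ℕ → ℕ → ℝ)
    (hOY1 : ∀ (Y : Set ℕ) (t : ℕ), t ∈ Y → OY Y t = 0)
    (hOY2 : ∀ (Y : Set ℕ) (t : ℕ), t ∉ Y → OY Y t = O₀ t)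
    (hQ0 : ∀ Y : Set ℕ, Q Y t₀ = q0)
    (hQ : ∀ (Y : Set ℕ) (t : ℕ), t₀ < t →
      Q Y t = min c (Q Y (t - 1) + I t - OY Y t))
    (hD : ∀ (Y : Set ℕ) (t : ℕ), t₀ < t →
      D Y t = max 0 (Q Y (t - 1) + I t - OY Y t - c))
    (hQτ : ∀ (Y : Set ℕ) (t : ℕ),
      Qτ Y t = max 0 (Qτ0 - ∑ t' ∈ Finset.Icc (t₀ + 1) t, (OY Y t' + D Y t')))
    (A Y : Set ℕ) (t' : ℕ) (ht'A : t' ∈ A) (ht'Y : t' ∉ Y) :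
    ∀ t, t₀ ≤ t → Qτ (insert t' Y) t = 0 →
      ∃ u, t₀ ≤ u ∧ u ≤ t ∧ Qτ Y u = 0 := by
  set Y' : Set ℕ := insert t' Y with hY'
  -- output under Y' is pointwise at most output under Y
  have hOle : ∀ t : ℕ, OY Y' t ≤ OY Y t := by
    intro t
    by_cases hYt : t ∈ Y
    · rw [hOY1 Y t hYt, hOY1 Y' t (Set.mem_insert_of_mem _ hYt)]
    · rw [hOY2 Y t hYt]
      by_cases hY't : t ∈ Y'
      · rw [hOY1 Y' t hY't]; exact hO₀ t
      · rw [hOY2 Y' t hY't]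
  -- monotonicity of the queue
  have hQmono : ∀ t, t₀ ≤ t → Q Y t ≤ Q Y' t := by
    intro t ht
    induction t, ht using Nat.le_induction with
    | base => rw [hQ0, hQ0]
    | succ n hn ih =>
        have h1 : t₀ < n + 1 := Nat.lt_succ_of_le hn
        rw [hQ Y (n+1) h1, hQ Y' (n+1) h1]
        simp only [Nat.add_sub_cancel]
        have := hOle (n+1)
        exact min_le_min le_rfl (by linarith)
  -- conservation: queue plus cumulative served equals initial plus input
  have hcons : ∀ Z : Set ℕ, ∀ t, t₀ ≤ t →
      Q Z t + ∑ s ∈ Finset.Icc (t₀ + 1) t, (OY Z s + D Z s)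
        = q0 + ∑ s ∈ Finset.Icc (t₀ + 1) t, I s := by
    intro Z t ht
    induction t, ht using Nat.le_induction with
    | base => simp [hQ0, Finset.Icc_eq_empty_of_lt (Nat.lt_succ_self t₀)]
    | succ n hn ih =>
        have h1 : t₀ < n + 1 := Nat.lt_succ_of_le hn
        rw [Finset.sum_Icc_succ_top (Nat.succ_le_succ hn),
            Finset.sum_Icc_succ_top (Nat.succ_le_succ hn),
            hQ Z (n+1) h1, hD Z (n+1) h1]
        simp only [Nat.add_sub_cancel]
        rcases le_total (Q Z n + I (n+1) - OY Z (n+1)) c with h | h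
        · rw [min_eq_right h, max_eq_left (by linarith)]
          linarith
        · rw [min_eq_left h, max_eq_right (by linarith)]
          linarith
  intro t ht h0
  refine ⟨t, ht, le_rfl, ?_⟩
  have hsum : ∑ s ∈ Finset.Icc (t₀ + 1) t, (OY Y' s + D Y' s)
      ≤ ∑ s ∈ Finset.Icc (t₀ + 1) t, (OY Y s + D Y s) := by
    have h1 := hcons Y t ht
    have h2 := hcons Y' t ht
    have := hQmono t ht
    linarith
  rw [hQτ Y' t] at h0
  rw [hQτ Y t]
  have hle : Qτ0 - ∑ s ∈ Finset.Icc (t₀ + 1) t, (OY Y' s + D Y' s) ≤ 0 := by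
    by_contra hlt
    push_neg at hlt
    rw [max_eq_right hlt.le] at h0
    linarith
  exact max_eq_left (by linarith)
end

section
/- Monotonicity of evacuation time under attack set inclusion: if Y₁ ⊆ Y₂ are attack strategies, then t_e(Y₁) ≤ t_e(Y₂); the evacuation time of the target data is monotone nondecreasing in the set of attacked slots. -/
/-- Monotonicity of evacuation time under attack set inclusion: if Y₁ ⊆ Y₂, then
t_e(Y₁) ≤ t_e(Y₂) (whenever Y₂ has evacuated the target by time t, so has Y₁). -/
theorem evacuation_time_monotone
    (c : ℝ) (hc : 0 ≤ c) (t₀ : ℕ) (q0 Qτ0 : ℝ) (hq0 : 0 ≤ q0) (hq0c : q0 ≤ c)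
    (hQτ0 : 0 ≤ Qτ0)
    (I O₀ : ℕ → ℝ) (hI : ∀ t, 0 ≤ I t) (hO₀ : ∀ t, 0 ≤ O₀ t)
    (OY Q D Qτ : Set ℕ → ℕ → ℝ)
    (hOY1 : ∀ (Y : Set ℕ) (t : ℕ), t ∈ Y → OY Y t = 0)
    (hOY2 : ∀ (Y : Set ℕ) (t : ℕ), t ∉ Y → OY Y t = O₀ t)
    (hQ0 : ∀ Y : Set ℕ, Q Y t₀ = q0)
    (hQ : ∀ (Y : Set ℕ) (t : ℕ), t₀ < t →
      Q Y t = min c (Q Y (t - 1) + I t - OY Y t))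
    (hD : ∀ (Y : Set ℕ) (t : ℕ), t₀ < t →
      D Y t = max 0 (Q Y (t - 1) + I t - OY Y t - c))
    (hQτ : ∀ (Y : Set ℕ) (t : ℕ),
      Qτ Y t = max 0 (Qτ0 - ∑ t' ∈ Finset.Icc (t₀ + 1) t, (OY Y t' + D Y t')))
    (Y₁ Y₂ : Set ℕ) (hsub : Y₁ ⊆ Y₂) :
    ∀ t, t₀ ≤ t → Qτ Y₂ t = 0 →
      ∃ u, t₀ ≤ u ∧ u ≤ t ∧ Qτ Y₁ u = 0 := by
  -- OY Y₂ ≤ OY Y₁ pointwise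
  have hOle : ∀ t, OY Y₂ t ≤ OY Y₁ t := by
    intro t
    by_cases h2 : t ∈ Y₂
    · rw [hOY1 Y₂ t h2]
      by_cases h1 : t ∈ Y₁
      · rw [hOY1 Y₁ t h1]
      · rw [hOY2 Y₁ t h1]; exact hO₀ t
    · rw [hOY2 Y₂ t h2, hOY2 Y₁ t (fun h => h2 (hsub h))]
  -- Q Y₁ t ≤ Q Y₂ t for t ≥ t₀
  have hQle : ∀ t, t₀ ≤ t → Q Y₁ t ≤ Q Y₂ t := by
    intro t ht
    induction t, ht using Nat.le_induction with
    | base => rw [hQ0, hQ0]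
    | succ t ht ih =>
      have h1 : t₀ < t + 1 := Nat.lt_succ_of_le ht
      rw [hQ Y₁ (t+1) h1, hQ Y₂ (t+1) h1]
      simp only [Nat.add_sub_cancel]
      exact min_le_min le_rfl (by linarith [hOle (t+1)])
  -- telescoping identity for the cumulative outflow
  have hsum : ∀ Y : Set ℕ, ∀ t, t₀ ≤ t →
      ∑ t' ∈ Finset.Icc (t₀ + 1) t, (OY Y t' + D Y t')
        = q0 + (∑ t' ∈ Finset.Icc (t₀ + 1) t, I t') - Q Y t := by
    intro Y t ht
    induction t, ht using Nat.le_induction with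
    | base => simp [hQ0]
    | succ t ht ih =>
      have h1 : t₀ < t + 1 := Nat.lt_succ_of_le ht
      have hab : t₀ + 1 ≤ t + 1 := Nat.succ_le_succ ht
      rw [Finset.sum_Icc_succ_top hab, Finset.sum_Icc_succ_top hab, ih,
        hQ Y (t+1) h1, hD Y (t+1) h1]
      simp only [Nat.add_sub_cancel]
      rcases le_total (Q Y t + I (t+1) - OY Y (t+1)) c with h | h
      · rw [min_eq_right h, max_eq_left (by linarith)]; ring
      · rw [min_eq_left h, max_eq_right (by linarith)]; ring
  intro t ht h2
  refine ⟨t, ht, le_rfl, ?_⟩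
  have hs : ∑ t' ∈ Finset.Icc (t₀ + 1) t, (OY Y₂ t' + D Y₂ t')
      ≤ ∑ t' ∈ Finset.Icc (t₀ + 1) t, (OY Y₁ t' + D Y₁ t') := by
    rw [hsum Y₁ t ht, hsum Y₂ t ht]
    linarith [hQle t ht]
  have := hQτ Y₁ t
  have h2' := hQτ Y₂ t
  rw [h2'] at h2
  rw [this]
  have : max 0 (Qτ0 - ∑ t' ∈ Finset.Icc (t₀ + 1) t, (OY Y₁ t' + D Y₁ t'))
      ≤ max 0 (Qτ0 - ∑ t' ∈ Finset.Icc (t₀ + 1) t, (OY Y₂ t' + D Y₂ t')) :=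
    max_le_max le_rfl (by linarith)
  have h0 : (0:ℝ) ≤ max 0 (Qτ0 - ∑ t' ∈ Finset.Icc (t₀ + 1) t, (OY Y₁ t' + D Y₁ t')) :=
    le_max_left _ _
  linarith [h2 ▸ this]
end

section
/- Exchange property of minimal attack strategies: in the infinite-capacity constant-rate model, given two minimal feasible attack strategies Y and Y' for the same delay target t*, and any element t₁ ∈ Y \ Y', there exists t₂ ∈ Y' \ Y such that (Y' \ {t₂}) ∪ {t₁} is again a minimal feasible attack strategy for t*. -/
/-- A strategy `Y` is feasible for delay target `tstar` if the target data has not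
evacuated at any slot in `[t₀, tstar]`, i.e. its evacuation time exceeds `tstar`. -/
def Feasible (Qτ : Finset ℕ → ℕ → ℝ) (t₀ tstar : ℕ) (Y : Finset ℕ) : Prop :=
  ∀ t, t₀ ≤ t → t ≤ tstar → Qτ Y t ≠ 0

/-- A minimal feasible strategy: feasible, and no proper subset is feasible. -/
def MinimalFeasible (Qτ : Finset ℕ → ℕ → ℝ) (t₀ tstar : ℕ) (Y : Finset ℕ) : Prop :=
  Feasible Qτ t₀ tstar Y ∧ ∀ Z : Finset ℕ, Z ⊂ Y → ¬ Feasible Qτ t₀ tstar Z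

/-- Exchange property of minimal attack strategies: given two minimal feasible
strategies Y, Y' for the same target t* and any t₁ ∈ Y \ Y', there is
t₂ ∈ Y' \ Y such that (Y' \ {t₂}) ∪ {t₁} is again minimal feasible. -/
theorem exchange_property_minimal_strategies
    (t₀ : ℕ) (X : Set ℕ) (r : ℝ) (hr : 0 < r) (k : ℕ) (hk : 1 ≤ k)
    (hXinf : {t | t ∈ X ∧ t₀ < t}.Infinite)
    (Qτ : Finset ℕ → ℕ → ℝ)
    (hQτ : ∀ (Y : Finset ℕ) (t : ℕ),
      Qτ Y t = max 0 ((k : ℝ) * r -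
        r * (Nat.card {t' : ℕ | t' ∈ X ∧ t' ∉ Y ∧ t₀ < t' ∧ t' ≤ t} : ℝ)))
    (tstar : ℕ) (Y Y' : Finset ℕ)
    (hYX : ∀ y ∈ Y, y ∈ X) (hY'X : ∀ y ∈ Y', y ∈ X)
    (hY : MinimalFeasible Qτ t₀ tstar Y)
    (hY' : MinimalFeasible Qτ t₀ tstar Y')
    (t₁ : ℕ) (ht₁ : t₁ ∈ Y \ Y') :
    ∃ t₂ ∈ Y' \ Y,
      MinimalFeasible Qτ t₀ tstar (insert t₁ (Y'.erase t₂)) := by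
  classical
  set S : Finset ℕ := (Finset.Icc (t₀+1) tstar).filter (· ∈ X) with hSdef
  -- counting lemma
  have hcount : ∀ (Z : Finset ℕ) (t : ℕ),
      (Nat.card {t' : ℕ | t' ∈ X ∧ t' ∉ Z ∧ t₀ < t' ∧ t' ≤ t})
        = ((((Finset.Icc (t₀+1) t).filter (· ∈ X)) \ Z)).card := by
    intro Z t
    have hset : {t' : ℕ | t' ∈ X ∧ t' ∉ Z ∧ t₀ < t' ∧ t' ≤ t}
        = (((((Finset.Icc (t₀+1) t).filter (· ∈ X)) \ Z) : Finset ℕ) : Set ℕ) := by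
      ext x
      simp only [Set.mem_setOf_eq, Finset.coe_sdiff, Set.mem_diff, Finset.mem_coe,
        Finset.mem_filter, Finset.mem_Icc]
      constructor
      · rintro ⟨h1, h2, h3, h4⟩; exact ⟨⟨⟨h3, h4⟩, h1⟩, h2⟩
      · rintro ⟨⟨⟨h3, h4⟩, h1⟩, h2⟩; exact ⟨h1, h2, h3, h4⟩
    rw [hset, Nat.card_coe_set_eq, Set.ncard_coe_finset]
  -- Qτ nonvanishing characterization
  have hQne : ∀ (Z : Finset ℕ) (t : ℕ),
      Qτ Z t ≠ 0 ↔ ((((Finset.Icc (t₀+1) t).filter (· ∈ X)) \ Z)).card < k := by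
    intro Z t
    rw [hQτ, hcount]
    set c : ℕ := ((((Finset.Icc (t₀+1) t).filter (· ∈ X)) \ Z)).card
    constructor
    · intro h
      by_contra hc
      push_neg at hc
      have hle : (k : ℝ) * r - r * (c : ℝ) ≤ 0 := by
        have : (k : ℝ) ≤ (c : ℝ) := by exact_mod_cast hc
        nlinarith
      exact h (max_eq_left hle)
    · intro h
      have hlt : (c : ℝ) < (k : ℝ) := by exact_mod_cast h
      have hpos : 0 < (k : ℝ) * r - r * (c : ℝ) := by nlinarith
      rw [max_eq_right hpos.le]
      exact ne_of_gt hpos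
  -- feasibility characterization
  have hfeas : ∀ Z : Finset ℕ, Feasible Qτ t₀ tstar Z ↔ (S \ Z).card < k := by
    intro Z
    constructor
    · intro hf
      by_cases h : t₀ ≤ tstar
      · exact (hQne Z tstar).mp (hf tstar h le_rfl)
      · have : S = ∅ := by
          rw [hSdef]
          have : Finset.Icc (t₀+1) tstar = ∅ := by
            rw [Finset.Icc_eq_empty_iff]; omega
          rw [this, Finset.filter_empty]
        rw [this]
        simpa using (show 0 < k from hk)
    · intro h t ht1 ht2
      rw [hQne]
      refine lt_of_le_of_lt (Finset.card_le_card ?_) h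
      intro x hx
      rw [Finset.mem_sdiff] at hx ⊢
      refine ⟨?_, hx.2⟩
      have := hx.1
      rw [Finset.mem_filter, Finset.mem_Icc] at this ⊢
      exact ⟨⟨this.1.1, this.1.2.trans ht2⟩, this.2⟩
  -- minimality characterization for nonempty strategies
  have hmin : ∀ Z : Finset ℕ, MinimalFeasible Qτ t₀ tstar Z → Z.Nonempty →
      Z ⊆ S ∧ (S \ Z).card + 1 = k := by
    rintro Z ⟨hf, hm⟩ hne
    have hsub : Z ⊆ S := by
      intro y hy
      by_contra hyS
      refine hm (Z.erase y) (Finset.erase_ssubset hy) ?_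
      rw [hfeas] at hf ⊢
      have hEq : S \ Z.erase y = S \ Z := by
        ext x
        simp only [Finset.mem_sdiff, Finset.mem_erase]
        constructor
        · rintro ⟨hxS, hx⟩
          refine ⟨hxS, fun hxZ => ?_⟩
          by_cases hxy : x = y
          · exact hyS (hxy ▸ hxS)
          · exact hx ⟨hxy, hxZ⟩
        · rintro ⟨hxS, hx⟩
          exact ⟨hxS, fun hh => hx hh.2⟩
      rw [hEq]; exact hf
    obtain ⟨y, hy⟩ := hne
    have h1 := hm (Z.erase y) (Finset.erase_ssubset hy)
    rw [hfeas] at hf h1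
    push_neg at h1
    have hyS : y ∈ S := hsub hy
    have hEq : S \ Z.erase y = insert y (S \ Z) := by
      ext x
      simp only [Finset.mem_sdiff, Finset.mem_erase, Finset.mem_insert]
      constructor
      · rintro ⟨hxS, hx⟩
        by_cases hxy : x = y
        · exact Or.inl hxy
        · exact Or.inr ⟨hxS, fun hxZ => hx ⟨hxy, hxZ⟩⟩
      · rintro (rfl | ⟨hxS, hx⟩)
        · exact ⟨hyS, fun hh => hh.1 rfl⟩
        · exact ⟨hxS, fun hh => hx hh.2⟩
    rw [hEq, Finset.card_insert_of_notMem (by simp [hy])] at h1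
    exact ⟨hsub, by omega⟩
  -- basic facts
  rw [Finset.mem_sdiff] at ht₁
  obtain ⟨ht₁Y, ht₁Y'⟩ := ht₁
  obtain ⟨hYsub, hYcard⟩ := hmin Y hY ⟨t₁, ht₁Y⟩
  -- find t₂
  have hne : (Y' \ Y).Nonempty := by
    rw [Finset.sdiff_nonempty]
    intro hsub
    exact hY.2 Y' ⟨hsub, fun h => ht₁Y' (h ht₁Y)⟩ hY'.1
  obtain ⟨t₂, ht₂⟩ := hne
  refine ⟨t₂, ht₂, ?_⟩
  rw [Finset.mem_sdiff] at ht₂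
  obtain ⟨ht₂Y', ht₂Y⟩ := ht₂
  obtain ⟨hY'sub, hY'card⟩ := hmin Y' hY' ⟨t₂, ht₂Y'⟩
  set Y'' : Finset ℕ := insert t₁ (Y'.erase t₂) with hY''def
  have ht₁e : t₁ ∉ Y'.erase t₂ := fun h => ht₁Y' (Finset.mem_of_mem_erase h)
  have hY''sub : Y'' ⊆ S := by
    intro x hx
    rw [hY''def, Finset.mem_insert] at hx
    rcases hx with rfl | hx
    · exact hYsub ht₁Y
    · exact hY'sub (Finset.mem_of_mem_erase hx)
  have hY'ne : 1 ≤ Y'.card := Finset.card_pos.mpr ⟨t₂, ht₂Y'⟩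
  have hY''card : Y''.card = Y'.card := by
    rw [hY''def, Finset.card_insert_of_notMem ht₁e, Finset.card_erase_of_mem ht₂Y']
    omega
  have hSY' : (S \ Y').card = S.card - Y'.card := Finset.card_sdiff_of_subset hY'sub
  have hSY'' : (S \ Y'').card = S.card - Y''.card := Finset.card_sdiff_of_subset hY''sub
  have hY'le : Y'.card ≤ S.card := Finset.card_le_card hY'sub
  constructor
  · rw [hfeas]
    omega
  · intro Z hZ
    rw [hfeas]
    have hZsub : Z ⊆ Y'' := hZ.1
    have hZcard : Z.card < Y''.card := Finset.card_lt_card hZ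
    have hZS : Z ⊆ S := hZsub.trans hY''sub
    have hSZ : (S \ Z).card = S.card - Z.card := Finset.card_sdiff_of_subset hZS
    omega
end

section
/- If the queue is full at every time slot in an interval [t₁, t₂] under strategy Y, then attacking any additional subset of attackable slots within [t₁, t₂] leaves the queue length at t₂ and the sub-queue before the target unchanged at every time t ≥ t₂ (Lemma 1, set version). -/
/-- Lemma 1 (set version): if the queue is full at every slot in [t₁, t₂] under
strategy Y, then additionally attacking any set A' of slots within [t₁, t₂]
disjoint from Y leaves both the full queue and the sub-queue before the target
unchanged at every time t ≥ t₂. -/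
theorem full_interval_attacks_no_effect
    (c : ℝ) (hc : 0 ≤ c) (t₀ t₁ t₂ : ℕ) (h01 : t₀ ≤ t₁) (h12 : t₁ ≤ t₂)
    (q0 Qτ0 : ℝ) (hq0 : 0 ≤ q0) (hq0c : q0 ≤ c) (hQτ0 : 0 ≤ Qτ0)
    (I O₀ : ℕ → ℝ) (hI : ∀ t, 0 ≤ I t) (hO₀ : ∀ t, 0 ≤ O₀ t)
    (OY Q D Qτ : Set ℕ → ℕ → ℝ)
    (hOY1 : ∀ (Y : Set ℕ) (t : ℕ), t ∈ Y → OY Y t = 0)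
    (hOY2 : ∀ (Y : Set ℕ) (t : ℕ), t ∉ Y → OY Y t = O₀ t)
    (hQ0 : ∀ Y : Set ℕ, Q Y t₀ = q0)
    (hQ : ∀ (Y : Set ℕ) (t : ℕ), t₀ < t →
      Q Y t = min c (Q Y (t - 1) + I t - OY Y t))
    (hD : ∀ (Y : Set ℕ) (t : ℕ), t₀ < t →
      D Y t = max 0 (Q Y (t - 1) + I t - OY Y t - c))
    (hQτ : ∀ (Y : Set ℕ) (t : ℕ),
      Qτ Y t = max 0 (Qτ0 - ∑ t' ∈ Finset.Icc (t₀ + 1) t, (OY Y t' + D Y t')))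
    (Y A' : Set ℕ) (hA' : A' ⊆ Set.Icc t₁ t₂) (hdisj : Disjoint A' Y)
    (hfull : ∀ t, t₁ ≤ t → t ≤ t₂ → Q Y t = c) :
    ∀ t, t₂ ≤ t → Q (Y ∪ A') t = Q Y t ∧ Qτ (Y ∪ A') t = Qτ Y t := by
  have key : ∀ t, t₀ < t → Q (Y ∪ A') (t-1) = Q Y (t-1) →
      Q (Y ∪ A') t = Q Y t ∧ OY (Y ∪ A') t + D (Y ∪ A') t = OY Y t + D Y t := by
    intro t ht hprev
    by_cases hA : t ∈ A'
    · have htY : t ∉ Y := fun h => (Set.disjoint_left.mp hdisj hA) h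
      have h1 : t₁ ≤ t := (hA' hA).1
      have h2 : t ≤ t₂ := (hA' hA).2
      have hOYt : OY Y t = O₀ t := hOY2 Y t htY
      have hOZt : OY (Y ∪ A') t = 0 := hOY1 _ t (Or.inr hA)
      have hQYt : Q Y t = c := hfull t h1 h2
      have hmin : min c (Q Y (t-1) + I t - O₀ t) = c := by
        rw [← hOYt, ← hQ Y t ht]; exact hQYt
      have hge : c ≤ Q Y (t-1) + I t - O₀ t := by
        by_contra h
        push_neg at h
        rw [min_eq_right h.le] at hmin
        linarith
      constructor
      · rw [hQ _ t ht, hprev, hOZt, hQYt, sub_zero,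
          min_eq_left (by linarith [hO₀ t])]
      · rw [hD _ t ht, hD _ t ht, hprev, hOZt, hOYt, sub_zero,
          max_eq_right (by linarith : (0:ℝ) ≤ Q Y (t-1) + I t - O₀ t - c),
          max_eq_right (by linarith [hO₀ t] : (0:ℝ) ≤ Q Y (t-1) + I t - c)]
        ring
    · have hOeq : OY (Y ∪ A') t = OY Y t := by
        by_cases hY : t ∈ Y
        · rw [hOY1 Y t hY, hOY1 _ t (Or.inl hY)]
        · rw [hOY2 Y t hY, hOY2 _ t (fun h => h.elim hY hA)]
      exact ⟨by rw [hQ _ t ht, hQ _ t ht, hprev, hOeq],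
             by rw [hD _ t ht, hD _ t ht, hprev, hOeq]⟩
  have hQeq : ∀ t, t₀ ≤ t → Q (Y ∪ A') t = Q Y t := by
    intro t ht
    obtain ⟨n, rfl⟩ := Nat.exists_eq_add_of_le ht
    induction n with
    | zero => simp [hQ0]
    | succ n ih =>
      have hih := ih (Nat.le_add_right _ _)
      have ht' : t₀ < t₀ + (n+1) := by omega
      have hsub : t₀ + (n+1) - 1 = t₀ + n := by omega
      exact (key _ ht' (by rw [hsub]; exact hih)).1
  intro t ht
  have hQe := hQeq t (le_trans (le_trans h01 h12) ht)
  refine ⟨hQe, ?_⟩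
  have hsum : ∑ t' ∈ Finset.Icc (t₀ + 1) t, (OY (Y ∪ A') t' + D (Y ∪ A') t')
      = ∑ t' ∈ Finset.Icc (t₀ + 1) t, (OY Y t' + D Y t') := by
    apply Finset.sum_congr rfl
    intro t' ht'
    have h1 : t₀ < t' := by
      have := (Finset.mem_Icc.mp ht').1; omega
    exact (key t' h1 (hQeq (t'-1) (by omega))).2
  rw [hQτ, hQτ, hsum]
end
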